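/- arXiv:2007.06305 — 2 statements merged into one kernel-verified Lean document; each statement's English description precedes it below -/
import Mathlib

section
/- Let A and B be finite types and let ρ, X, Y : Matrix (A × B) (A × B) ℂ. With Π_A and Π_B the two-copy permutation matrices defined by (Π_A)_{((a₁,b₁),(a₂,b₂)),((a₁',b₁'),(a₂',b₂'))} = δ_{a₁,a₂'} δ_{a₂,a₁'} δ_{b₁,b₁'} δ_{b₂,b₂'} and (Π_B)_{((a₁,b₁),(a₂,b₂)),((a₁',b₁'),(a₂',b₂'))} = δ_{a₁,a₁'} δ_{a₂,a₂'} δ_{b₁,b₂'} δ_{b₂,b₁'}, it holds that Tr(ρ^{T_A} · X^{T_A} · Y^{T_A}) = Tr(Π_B · (ρ ⊗ I) · Π_A · (X ⊗ Y)), where I is the identity matrix on (A × B) and ⊗ is the Kronecker product. -/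
open Kronecker

variable {A B : Type*}

/-- Partial transpose on the `A` factor:
`(X^{T_A})_{(a,b),(a',b')} = X_{(a',b),(a,b')}`. -/
def partialTransposeA (X : Matrix (A × B) (A × B) ℂ) :
    Matrix (A × B) (A × B) ℂ :=
  fun p q => X (q.1, p.2) (p.1, q.2)

/-- The two-copy permutation matrix `Π_A` swapping the `A`-registers:
`(Π_A)_{((a₁,b₁),(a₂,b₂)),((a₁',b₁'),(a₂',b₂'))} = δ_{a₁,a₂'} δ_{a₂,a₁'} δ_{b₁,b₁'} δ_{b₂,b₂'}`. -/
def swapA2 [DecidableEq A] [DecidableEq B] :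
    Matrix ((A × B) × (A × B)) ((A × B) × (A × B)) ℂ :=
  fun p q =>
    if p.1.1 = q.2.1 ∧ p.2.1 = q.1.1 ∧ p.1.2 = q.1.2 ∧ p.2.2 = q.2.2 then 1 else 0

/-- The two-copy permutation matrix `Π_B` swapping the `B`-registers:
`(Π_B)_{((a₁,b₁),(a₂,b₂)),((a₁',b₁'),(a₂',b₂'))} = δ_{a₁,a₁'} δ_{a₂,a₂'} δ_{b₁,b₂'} δ_{b₂,b₁'}`. -/
def swapB2 [DecidableEq A] [DecidableEq B] :
    Matrix ((A × B) × (A × B)) ((A × B) × (A × B)) ℂ :=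
  fun p q =>
    if p.1.1 = q.1.1 ∧ p.2.1 = q.2.1 ∧ p.1.2 = q.2.2 ∧ p.2.2 = q.1.2 then 1 else 0

/-- **Third wiring-diagram identity of Table 1 of the SM:**
`Tr(ρ^{T_A} · X^{T_A} · Y^{T_A}) = Tr(Π_B · (ρ ⊗ I) · Π_A · (X ⊗ Y))`. -/
theorem trace_pt_triple_eq [Fintype A] [Fintype B] [DecidableEq A] [DecidableEq B]
    (ρ X Y : Matrix (A × B) (A × B) ℂ) :
    (partialTransposeA ρ * partialTransposeA X * partialTransposeA Y).trace =
      (swapB2 * (ρ ⊗ₖ (1 : Matrix (A × B) (A × B) ℂ)) * swapA2 * (X ⊗ₖ Y)).trace := by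
  classical
  have hB : ∀ M : Matrix ((A × B) × (A × B)) ((A × B) × (A × B)) ℂ,
      swapB2 * M = Matrix.of (fun P Q => M ((P.1.1, P.2.2), (P.2.1, P.1.2)) Q) := by
    intro M; ext P Q
    rw [Matrix.mul_apply]
    rw [Finset.sum_eq_single (((P.1.1, P.2.2), (P.2.1, P.1.2)) : (A × B) × (A × B))]
    · simp [swapB2]
    · rintro ⟨⟨r11, r12⟩, r21, r22⟩ - hR
      simp only [swapB2]
      rw [if_neg, zero_mul]
      rintro ⟨h1, h2, h3, h4⟩
      subst h1; subst h2; subst h3; subst h4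
      exact hR rfl
    · intro h; exact absurd (Finset.mem_univ _) h
  have hA : ∀ M : Matrix ((A × B) × (A × B)) ((A × B) × (A × B)) ℂ,
      M * swapA2 = Matrix.of (fun P Q => M P ((Q.2.1, Q.1.2), (Q.1.1, Q.2.2))) := by
    intro M; ext P Q
    rw [Matrix.mul_apply]
    rw [Finset.sum_eq_single (((Q.2.1, Q.1.2), (Q.1.1, Q.2.2)) : (A × B) × (A × B))]
    · simp [swapA2]
    · rintro ⟨⟨r11, r12⟩, r21, r22⟩ - hR
      simp only [swapA2]
      rw [if_neg, mul_zero]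
      rintro ⟨h1, h2, h3, h4⟩
      subst h1; subst h2; subst h3; subst h4
      exact hR rfl
    · intro h; exact absurd (Finset.mem_univ _) h
  rw [hB, hA]
  -- the involutive reindexing on Q
  let u : (A × B) × (A × B) ≃ (A × B) × (A × B) :=
    ⟨fun Q => ((Q.2.1, Q.1.2), (Q.1.1, Q.2.2)),
     fun Q => ((Q.2.1, Q.1.2), (Q.1.1, Q.2.2)),
     fun Q => rfl, fun Q => rfl⟩
  have hRHS : (Matrix.of (fun P Q : (A × B) × (A × B) =>
        (ρ ⊗ₖ (1 : Matrix (A × B) (A × B) ℂ))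
          ((P.1.1, P.2.2), (P.2.1, P.1.2)) ((Q.2.1, Q.1.2), (Q.1.1, Q.2.2))) *
        (X ⊗ₖ Y)).trace
      = ∑ P : (A × B) × (A × B), ∑ s : A × B,
          ρ (P.1.1, P.2.2) s * (X (P.2.1, s.2) P.1 * Y (s.1, P.1.2) P.2) := by
    rw [Matrix.trace]
    simp only [Matrix.diag, Matrix.mul_apply, Matrix.of_apply, Matrix.kroneckerMap_apply,
      Matrix.one_apply]
    refine Finset.sum_congr rfl fun P _ => ?_
    rw [← Equiv.sum_comp u]
    simp [u, Fintype.sum_prod_type, Finset.sum_ite_eq, mul_assoc]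
  dsimp only [Matrix.of_apply]
  rw [hRHS]
  have hLHS : (partialTransposeA ρ * partialTransposeA X * partialTransposeA Y).trace
      = ∑ p : A × B, ∑ v : A × B, ∑ w : A × B,
          ρ (v.1, p.2) (p.1, v.2) * (X (w.1, v.2) (v.1, w.2) * Y (p.1, w.2) (w.1, p.2)) := by
    rw [Matrix.trace]
    simp only [Matrix.diag, Matrix.mul_apply, partialTransposeA, Finset.sum_mul]
    refine Finset.sum_congr rfl fun p _ => ?_
    rw [Finset.sum_comm]
    refine Finset.sum_congr rfl fun v _ => Finset.sum_congr rfl fun w _ => by ring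
  rw [hLHS]
  have key : (∑ x : (A × B) × (A × B) × (A × B),
        ρ (x.2.1.1, x.1.2) (x.1.1, x.2.1.2) *
          (X (x.2.2.1, x.2.1.2) (x.2.1.1, x.2.2.2) * Y (x.1.1, x.2.2.2) (x.2.2.1, x.1.2)))
      = ∑ y : ((A × B) × (A × B)) × (A × B),
          ρ (y.1.1.1, y.1.2.2) y.2 * (X (y.1.2.1, y.2.2) y.1.1 * Y (y.2.1, y.1.1.2) y.1.2) :=
    Fintype.sum_equiv
      (⟨fun x => (((x.2.1.1, x.2.2.2), (x.2.2.1, x.1.2)), (x.1.1, x.2.1.2)),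
        fun y => ((y.2.1, y.1.2.2), ((y.1.1.1, y.2.2), (y.1.2.1, y.1.1.2))),
        fun x => rfl, fun y => rfl⟩) _ _ (fun x => rfl)
  simp only [Fintype.sum_prod_type] at key
  simp only [Fintype.sum_prod_type]
  exact key
end

section
/- Let A and B be finite types and let X, Y, Z : Matrix (A × B) (A × B) ℂ. On the three-copy space indexed by (A × B) × (A × B) × (A × B), define the cyclic permutation matrices Π_A, with entries (Π_A)_{((a₁,b₁),(a₂,b₂),(a₃,b₃)),((a₁',b₁'),(a₂',b₂'),(a₃',b₃'))} = δ_{a₁,a₃'} δ_{a₂,a₁'} δ_{a₃,a₂'} δ_{b₁,b₁'} δ_{b₂,b₂'} δ_{b₃,b₃'}, and Π_B, with entries δ_{a₁,a₁'} δ_{a₂,a₂'} δ_{a₃,a₃'} δ_{b₁,b₂'} δ_{b₂,b₃'} δ_{b₃,b₁'}. Then Tr(Π_A · Π_B · (X ⊗ Y ⊗ Z)) = Tr(X^{T_A} · Y^{T_A} · Z^{T_A}). -/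
open Kronecker

variable {A B : Type*}

/-- The three-copy cyclic permutation matrix `Π_A` acting on the `A`-registers:
`(Π_A)_{((a₁,b₁),(a₂,b₂),(a₃,b₃)),((a₁',b₁'),(a₂',b₂'),(a₃',b₃'))}
  = δ_{a₁,a₃'} δ_{a₂,a₁'} δ_{a₃,a₂'} δ_{b₁,b₁'} δ_{b₂,b₂'} δ_{b₃,b₃'}`. -/
def cycleA3 [DecidableEq A] [DecidableEq B] :
    Matrix ((A × B) × (A × B) × (A × B)) ((A × B) × (A × B) × (A × B)) ℂ :=
  fun p q =>
    if p.1.1 = q.2.2.1 ∧ p.2.1.1 = q.1.1 ∧ p.2.2.1 = q.2.1.1 ∧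
       p.1.2 = q.1.2 ∧ p.2.1.2 = q.2.1.2 ∧ p.2.2.2 = q.2.2.2 then 1 else 0

/-- The three-copy cyclic permutation matrix `Π_B` acting on the `B`-registers
in the opposite direction:
`(Π_B)_{((a₁,b₁),(a₂,b₂),(a₃,b₃)),((a₁',b₁'),(a₂',b₂'),(a₃',b₃'))}
  = δ_{a₁,a₁'} δ_{a₂,a₂'} δ_{a₃,a₃'} δ_{b₁,b₂'} δ_{b₂,b₃'} δ_{b₃,b₁'}`. -/
def cycleB3 [DecidableEq A] [DecidableEq B] :
    Matrix ((A × B) × (A × B) × (A × B)) ((A × B) × (A × B) × (A × B)) ℂ :=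
  fun p q =>
    if p.1.1 = q.1.1 ∧ p.2.1.1 = q.2.1.1 ∧ p.2.2.1 = q.2.2.1 ∧
       p.1.2 = q.2.1.2 ∧ p.2.1.2 = q.2.2.2 ∧ p.2.2.2 = q.1.2 then 1 else 0

private def fA (p : (A × B) × (A × B) × (A × B)) : (A × B) × (A × B) × (A × B) :=
  ((p.2.1.1, p.1.2), (p.2.2.1, p.2.1.2), (p.1.1, p.2.2.2))

private def fB (p : (A × B) × (A × B) × (A × B)) : (A × B) × (A × B) × (A × B) :=
  ((p.1.1, p.2.2.2), (p.2.1.1, p.1.2), (p.2.2.1, p.2.1.2))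

private lemma cycleA3_eq [DecidableEq A] [DecidableEq B]
    (p q : (A × B) × (A × B) × (A × B)) :
    cycleA3 p q = if q = fA p then 1 else 0 := by
  unfold cycleA3 fA
  refine if_congr ?_ rfl rfl
  simp only [Prod.ext_iff]
  aesop

private lemma cycleB3_eq [DecidableEq A] [DecidableEq B]
    (p q : (A × B) × (A × B) × (A × B)) :
    cycleB3 p q = if q = fB p then 1 else 0 := by
  unfold cycleB3 fB
  refine if_congr ?_ rfl rfl
  simp only [Prod.ext_iff]
  aesop

private def e3 : ((A × B) × (A × B) × (A × B)) ≃ ((A × B) × (A × B) × (A × B)) where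
  toFun p := ((p.1.1, p.2.2.2), (p.2.2.1, p.2.1.2), (p.2.1.1, p.1.2))
  invFun q := ((q.1.1, q.2.2.2), (q.2.2.1, q.2.1.2), (q.2.1.1, q.1.2))
  left_inv p := rfl
  right_inv q := rfl

/-- **Fifth wiring-diagram identity of Table 1 of the SM (three-copy formula):**
`Tr(Π_A · Π_B · (X ⊗ Y ⊗ Z)) = Tr(X^{T_A} · Y^{T_A} · Z^{T_A})`. -/
theorem trace_cycleA_cycleB_kronecker [Fintype A] [Fintype B] [DecidableEq A] [DecidableEq B]
    (X Y Z : Matrix (A × B) (A × B) ℂ) :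
    (cycleA3 * cycleB3 * (X ⊗ₖ (Y ⊗ₖ Z))).trace =
      (partialTransposeA X * partialTransposeA Y * partialTransposeA Z).trace := by
  have hL : (cycleA3 * cycleB3 * (X ⊗ₖ (Y ⊗ₖ Z))).trace =
      ∑ p : (A × B) × (A × B) × (A × B),
        (X ⊗ₖ (Y ⊗ₖ Z)) (fB (fA p)) p := by
    simp only [Matrix.trace, Matrix.diag, Matrix.mul_apply, cycleA3_eq, cycleB3_eq,
      ite_mul, one_mul, zero_mul, Finset.sum_ite_eq', Finset.mem_univ, if_true]
  have hR : (partialTransposeA X * partialTransposeA Y * partialTransposeA Z).trace =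
      ∑ q : (A × B) × (A × B) × (A × B),
        partialTransposeA X q.1 q.2.2 * partialTransposeA Y q.2.2 q.2.1 *
          partialTransposeA Z q.2.1 q.1 := by
    simp only [Matrix.trace, Matrix.diag, Matrix.mul_apply, Finset.sum_mul]
    conv_rhs => rw [Fintype.sum_prod_type]
    refine Finset.sum_congr rfl fun u _ => ?_
    conv_rhs => rw [Fintype.sum_prod_type]
  rw [hL, hR]
  refine Fintype.sum_equiv e3 _ _ fun p => ?_
  simp only [e3, Equiv.coe_fn_mk, fA, fB, partialTransposeA, Matrix.kroneckerMap_apply]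
  ring
end
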